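/- arXiv:1108.4953 — 3 statements merged into one kernel-verified Lean document; each statement's English description precedes it below -/
import Mathlib

section
/- For every graph G on n vertices, the fractional Hadwiger number satisfies h_f(G) ≤ √(2·h(G)·n), where h(G) is the Hadwiger number of G. -/
open Finset

/-- Any two members of a bramble either share a vertex or are joined by an edge,
and each member induces a connected subgraph. -/
def IsBramble {V : Type} (G : SimpleGraph V) (B : Finset (Finset V)) : Prop :=
  (∀ A ∈ B, (G.induce (A : Set V)).Connected) ∧
    ∀ A ∈ B, ∀ A' ∈ B, (∃ v, v ∈ A ∧ v ∈ A') ∨ ∃ a ∈ A, ∃ b ∈ A', G.Adj a b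

/-- A strong bramble: any two (possibly equal) members are joined by an edge. -/
def IsStrongBramble {V : Type} (G : SimpleGraph V) (B : Finset (Finset V)) : Prop :=
  (∀ A ∈ B, (G.induce (A : Set V)).Connected) ∧
    ∀ A ∈ B, ∀ A' ∈ B, ∃ a ∈ A, ∃ b ∈ A', G.Adj a b

/-- A valid weighting: nonnegative weights whose total at every vertex is at most 1. -/
def IsValidWeight {V : Type} [DecidableEq V] (B : Finset (Finset V)) (w : Finset V → ℝ) : Prop :=
  (∀ A ∈ B, 0 ≤ w A) ∧ ∀ v : V, ∑ A ∈ B.filter (fun A => v ∈ A), w A ≤ 1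

/-- The fractional Hadwiger number. -/
noncomputable def fracHadwiger {V : Type} [Fintype V] [DecidableEq V] (G : SimpleGraph V) : ℝ :=
  sSup {h : ℝ | ∃ B : Finset (Finset V), ∃ w : Finset V → ℝ,
    IsBramble G B ∧ IsValidWeight B w ∧ h = ∑ A ∈ B, w A}

/-- The r-integral Hadwiger number: all weights multiples of 1/r. -/
noncomputable def rIntHadwiger {V : Type} [Fintype V] [DecidableEq V]
    (G : SimpleGraph V) (r : ℕ) : ℝ :=
  sSup {h : ℝ | ∃ B : Finset (Finset V), ∃ w : Finset V → ℝ,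
    IsBramble G B ∧ IsValidWeight B w ∧ (∀ A ∈ B, ∃ k : ℕ, w A = k / r) ∧
    h = ∑ A ∈ B, w A}

/-- The lower fractional Hadwiger number (using strong brambles). -/
noncomputable def lowerFracHadwiger {V : Type} [Fintype V] [DecidableEq V]
    (G : SimpleGraph V) : ℝ :=
  sSup {h : ℝ | ∃ B : Finset (Finset V), ∃ w : Finset V → ℝ,
    IsStrongBramble G B ∧ IsValidWeight B w ∧ h = ∑ A ∈ B, w A}

/-- The lower r-integral Hadwiger number. -/
noncomputable def lowerRIntHadwiger {V : Type} [Fintype V] [DecidableEq V]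
    (G : SimpleGraph V) (r : ℕ) : ℝ :=
  sSup {h : ℝ | ∃ B : Finset (Finset V), ∃ w : Finset V → ℝ,
    IsStrongBramble G B ∧ IsValidWeight B w ∧ (∀ A ∈ B, ∃ k : ℕ, w A = k / r) ∧
    h = ∑ A ∈ B, w A}

/-- `G` has a clique minor of order `t`. -/
def HasCliqueMinor {V : Type} (G : SimpleGraph V) (t : ℕ) : Prop :=
  ∃ f : Fin t → Finset V,
    (∀ i, (f i).Nonempty) ∧
    (∀ i, (G.induce ((f i : Set V))).Connected) ∧
    (∀ i j, i ≠ j → Disjoint (f i) (f j)) ∧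
    (∀ i j, i ≠ j → ∃ a ∈ f i, ∃ b ∈ f j, G.Adj a b)

/-- `G` has a clique minor of order `t` and breadth at most `d` (each part has ≤ d vertices). -/
def HasCliqueMinorBreadth {V : Type} (G : SimpleGraph V) (t : ℕ) (d : ℝ) : Prop :=
  ∃ f : Fin t → Finset V,
    (∀ i, (f i).Nonempty) ∧
    (∀ i, (G.induce ((f i : Set V))).Connected) ∧
    (∀ i j, i ≠ j → Disjoint (f i) (f j)) ∧
    (∀ i j, i ≠ j → ∃ a ∈ f i, ∃ b ∈ f j, G.Adj a b) ∧
    (∀ i, ((f i).card : ℝ) ≤ d)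

/-- The Hadwiger number: the largest order of a clique minor. -/
noncomputable def hadwigerNumber {V : Type} (G : SimpleGraph V) : ℕ :=
  sSup {t : ℕ | HasCliqueMinor G t}

/-- The lexicographic product of two graphs. -/
def lexProd {α β : Type} (G : SimpleGraph α) (H : SimpleGraph β) : SimpleGraph (α × β) where
  Adj x y := G.Adj x.1 y.1 ∨ (x.1 = y.1 ∧ H.Adj x.2 y.2)
  symm := by
    constructor
    intro x y hxy
    rcases hxy with h | ⟨h1, h2⟩
    · exact Or.inl h.symm
    · exact Or.inr ⟨h1.symm, h2.symm⟩
  loopless := by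
    constructor
    intro x hx
    rcases hx with h | ⟨_, h2⟩
    · exact G.loopless.irrefl _ h
    · exact H.loopless.irrefl _ h2

/-- The complete blow-up `G[r] = G · K_r`. -/
def completeBlowup {α : Type} (G : SimpleGraph α) (r : ℕ) : SimpleGraph (α × Fin r) :=
  lexProd G (⊤ : SimpleGraph (Fin r))

/-- The blow-up `G(r) = G · I_r`. -/
def emptyBlowup {α : Type} (G : SimpleGraph α) (r : ℕ) : SimpleGraph (α × Fin r) :=
  lexProd G (⊥ : SimpleGraph (Fin r))

/-- `H` is a minor of `G`: branch sets indexed by the vertices of `H`. -/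
def IsMinor {W V : Type} (H : SimpleGraph W) (G : SimpleGraph V) : Prop :=
  ∃ f : W → Finset V,
    (∀ u, (G.induce ((f u : Set V))).Connected) ∧
    (∀ u u', u ≠ u' → Disjoint (f u) (f u')) ∧
    (∀ u u', H.Adj u u' → ∃ a ∈ f u, ∃ b ∈ f u', G.Adj a b)

/-- The k × k grid graph. -/
def gridGraph (k : ℕ) : SimpleGraph (Fin k × Fin k) where
  Adj a b := (a.1 = b.1 ∧ (a.2.val + 1 = b.2.val ∨ b.2.val + 1 = a.2.val)) ∨
             (a.2 = b.2 ∧ (a.1.val + 1 = b.1.val ∨ b.1.val + 1 = a.1.val))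
  symm := by
    constructor
    intro a b hab
    rcases hab with ⟨h1, h2⟩ | ⟨h1, h2⟩
    · exact Or.inl ⟨h1.symm, h2.symm⟩
    · exact Or.inr ⟨h1.symm, h2.symm⟩
  loopless := by
    constructor
    intro a ha
    rcases ha with ⟨_, h | h⟩ | ⟨_, h | h⟩ <;> omega

/-!
Take a bramble `B` with weight `w` of total `W`. Double counting gives `∑ w(A)·|A| ≤ n`, so a
member `A₀` of positive weight and minimum size has `W·|A₀| ≤ n`; the members meeting `A₀` carry
total weight at most `|A₀|`. Keeping `A₀` and discarding the members meeting it therefore leaves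
weight `W' ≥ W - |A₀|` with `W'² ≥ W² - 2n`. Iterating, `W² > 2kn` yields `k + 1` pairwise disjoint
members, and pairwise disjoint members of a bramble are the branch sets of a clique minor.
-/

theorem two_mul_lt_sq_of_le_sub {k n a W W' : ℝ} (hn : 0 ≤ n) (ha : 0 ≤ a) (hW : 0 ≤ W)
    (hWa : W * a ≤ n) (hW' : W - a ≤ W') (h : 2 * (k + 1) * n < W ^ 2) :
    2 * k * n < W' ^ 2 := by
  rcases le_or_gt a W with haW | hWa'
  · nlinarith [mul_le_mul hW' hW' (sub_nonneg.mpr haW) ((sub_nonneg.mpr haW).trans hW')]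
  · nlinarith [mul_le_mul_of_nonneg_left hWa'.le hW]

namespace IsValidWeight

variable {V : Type} [DecidableEq V] {B : Finset (Finset V)} {w : Finset V → ℝ}

theorem mono (hw : IsValidWeight B w) {B' : Finset (Finset V)} (hB' : B' ⊆ B) :
    IsValidWeight B' w :=
  ⟨fun A hA => hw.1 A (hB' hA), fun v =>
    (sum_le_sum_of_subset_of_nonneg (filter_subset_filter _ hB')
      fun A hA _ => hw.1 A (mem_filter.mp hA).1).trans (hw.2 v)⟩

theorem sum_nonneg (hw : IsValidWeight B w) : 0 ≤ ∑ A ∈ B, w A :=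
  Finset.sum_nonneg hw.1

theorem sum_mul_card_inter_le (hw : IsValidWeight B w) (X : Finset V) :
    ∑ A ∈ B, w A * #(X ∩ A) ≤ #X := by
  calc ∑ A ∈ B, w A * #(X ∩ A)
      = ∑ A ∈ B, ∑ v ∈ X, if v ∈ A then w A else 0 := by
        simp_rw [sum_ite_mem, sum_const, nsmul_eq_mul, mul_comm]
    _ = ∑ v ∈ X, ∑ A ∈ B with v ∈ A, w A := by
        rw [sum_comm]; simp_rw [sum_filter]
    _ ≤ ∑ _v ∈ X, (1 : ℝ) := sum_le_sum fun v _ => hw.2 v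
    _ = #X := by simp

theorem sum_not_disjoint_le (hw : IsValidWeight B w) (X : Finset V) :
    ∑ A ∈ B with ¬Disjoint A X, w A ≤ #X := by
  refine le_trans ?_ (hw.sum_mul_card_inter_le X)
  rw [sum_filter]
  refine sum_le_sum fun A hA => ?_
  by_cases hAX : Disjoint A X
  · simpa [hAX] using mul_nonneg (hw.1 A hA) (Nat.cast_nonneg #(X ∩ A))
  · have hcard : (1 : ℝ) ≤ #(X ∩ A) := by
      exact_mod_cast card_pos.mpr (not_disjoint_iff_nonempty_inter.mp fun h => hAX h.symm)
    simpa [hAX] using le_mul_of_one_le_right (hw.1 A hA) hcard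

variable [Fintype V]

theorem sum_mul_card_le (hw : IsValidWeight B w) :
    ∑ A ∈ B, w A * #A ≤ Fintype.card V := by
  simpa using hw.sum_mul_card_inter_le univ

theorem exists_mem_sum_mul_card_le (hw : IsValidWeight B w) (hpos : 0 < ∑ A ∈ B, w A) :
    ∃ A₀ ∈ B, (∑ A ∈ B, w A) * #A₀ ≤ Fintype.card V := by
  have hBpos : ({A ∈ B | 0 < w A}).Nonempty := by
    obtain ⟨A, hA, hwA⟩ :=
      exists_lt_of_sum_lt (show ∑ _A ∈ B, (0 : ℝ) < ∑ A ∈ B, w A by simpa using hpos)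
    exact ⟨A, mem_filter.mpr ⟨hA, hwA⟩⟩
  obtain ⟨A₀, hA₀, hmin⟩ := exists_min_image _ card hBpos
  refine ⟨A₀, (mem_filter.mp hA₀).1, le_trans ?_ hw.sum_mul_card_le⟩
  rw [sum_mul]
  refine sum_le_sum fun A hA => ?_
  rcases (hw.1 A hA).eq_or_lt with hwA | hwA
  · simp [← hwA]
  · exact mul_le_mul_of_nonneg_left (by exact_mod_cast hmin A (mem_filter.mpr ⟨hA, hwA⟩)) hwA.le

theorem exists_pairwiseDisjoint_of_two_mul_card_lt_sq (hne : ∀ A ∈ B, A.Nonempty)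
    (hw : IsValidWeight B w) (k : ℕ)
    (hk : 2 * k * Fintype.card V < (∑ A ∈ B, w A) ^ 2) :
    ∃ S ⊆ B, #S = k + 1 ∧ (S : Set (Finset V)).PairwiseDisjoint id := by
  induction k generalizing B with
  | zero =>
    obtain ⟨A₀, hA₀⟩ := nonempty_of_sum_ne_zero (s := B) (f := w) (by rintro h; simp [h] at hk)
    exact ⟨{A₀}, by simpa using hA₀, by simp, by simp⟩
  | succ k ih =>
    push_cast at hk
    obtain ⟨A₀, hA₀, hA₀card⟩ := hw.exists_mem_sum_mul_card_le (by
      nlinarith [hw.sum_nonneg, (by positivity : (0 : ℝ) ≤ (k + 1) * Fintype.card V)])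
    set B' := {A ∈ B | Disjoint A A₀}
    have hB' : B' ⊆ B := filter_subset _ _
    have hW' : ∑ A ∈ B, w A - #A₀ ≤ ∑ A ∈ B', w A := by
      linarith [sum_filter_add_sum_filter_not B (fun A => Disjoint A A₀) w,
        hw.sum_not_disjoint_le A₀]
    obtain ⟨S, hSB', hS, hSdisj⟩ := ih (fun A hA => hne A (hB' hA)) (hw.mono hB')
      (two_mul_lt_sq_of_le_sub (by positivity) (by positivity) hw.sum_nonneg hA₀card hW' hk)
    have hA₀S : A₀ ∉ S := fun h =>
      (hne A₀ hA₀).ne_empty (disjoint_self_iff_empty _ |>.mp (mem_filter.mp (hSB' h)).2)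
    refine ⟨insert A₀ S, insert_subset hA₀ (hSB'.trans hB'), by rw [card_insert_of_notMem hA₀S, hS],
      ?_⟩
    rw [coe_insert]
    exact hSdisj.insert fun A hA _ => (mem_filter.mp (hSB' hA)).2.symm

end IsValidWeight

namespace IsBramble

variable {V : Type} {G : SimpleGraph V} {B : Finset (Finset V)}

theorem nonempty_of_mem (hB : IsBramble G B) {A : Finset V} (hA : A ∈ B) : A.Nonempty := by
  obtain ⟨⟨v, hv⟩⟩ := (hB.1 A hA).nonempty
  exact ⟨v, hv⟩

theorem hasCliqueMinor_card (hB : IsBramble G B) {S : Finset (Finset V)} (hSB : S ⊆ B)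
    (hS : (S : Set (Finset V)).PairwiseDisjoint id) : HasCliqueMinor G #S := by
  let e := S.equivFin.symm
  have hmem (i : Fin #S) : (e i : Finset V) ∈ B := hSB (e i).2
  have hdisj {i j : Fin #S} (hij : i ≠ j) : Disjoint (e i : Finset V) (e j) :=
    hS (e i).2 (e j).2 (Subtype.val_injective.ne (e.injective.ne hij))
  refine ⟨fun i => e i, fun i => hB.nonempty_of_mem (hmem i), fun i => hB.1 _ (hmem i),
    fun i j hij => hdisj hij, fun i j hij => ?_⟩
  refine (hB.2 _ (hmem i) _ (hmem j)).resolve_left ?_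
  rintro ⟨v, hvi, hvj⟩
  exact disjoint_left.mp (hdisj hij) hvi hvj

end IsBramble

namespace HasCliqueMinor

variable {V : Type} [Fintype V] {G : SimpleGraph V} {t : ℕ}

theorem le_card (h : HasCliqueMinor G t) : t ≤ Fintype.card V := by
  obtain ⟨f, hne, -, hdisj, -⟩ := h
  choose g hg using hne
  have hg_inj : Function.Injective g := fun i j hij => by
    by_contra hne
    exact disjoint_left.mp (hdisj i j hne) (hg i) (hij ▸ hg j)
  simpa using Fintype.card_le_of_injective g hg_inj

theorem le_hadwigerNumber (h : HasCliqueMinor G t) : t ≤ hadwigerNumber G :=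
  le_csSup ⟨Fintype.card V, fun _ hs => le_card hs⟩ h

end HasCliqueMinor

/-- For every graph `G` on `n` vertices, `h_f(G) ≤ √(2·h(G)·n)`. -/
theorem fracHadwiger_le_sqrt_two_hadwiger_mul_card
    {V : Type} [Fintype V] [DecidableEq V] (G : SimpleGraph V) :
    fracHadwiger G ≤ Real.sqrt (2 * (hadwigerNumber G : ℝ) * (Fintype.card V : ℝ)) := by
  refine csSup_le ⟨0, ∅, fun _ => 0, ⟨by simp, by simp⟩, ⟨by simp, by simp⟩, by simp⟩ ?_
  rintro _ ⟨B, w, hB, hw, rfl⟩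
  rw [Real.le_sqrt hw.sum_nonneg (by positivity)]
  by_contra! hlt
  obtain ⟨S, hSB, hS, hdisj⟩ :=
    hw.exists_pairwiseDisjoint_of_two_mul_card_lt_sq (fun A => hB.nonempty_of_mem) _ hlt
  have := (hB.hasCliqueMinor_card hSB hdisj).le_hadwigerNumber
  omega
end

section
/- If a graph G has m edges, then its fractional Hadwiger number satisfies h_f(G) ≤ √(3m+1). -/
open Finset

/-! Write `S(v)` for the weight on `v`. In `h² = ∑_{A,A'} w(A) w(A')` every pair of members either
shares a vertex or is crossed by a dart `(u, v)` with `u ∈ A \ A'` and `v ∈ A' \ A`. Shared pairs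
contribute at most `∑_v S(v)² ≤ ∑_v S(v) = ∑_A |A| w(A)`, and a connected `A` spans at least
`2(|A| - 1)` darts; crossed pairs contribute at most `∑_{(u,v)} Q(u,v) Q(v,u)`, where `Q(u,v)` is the
weight on `u` but not on `v`. If `P` is the weight on both ends of a dart, then
`P/2 + Q(u,v) Q(v,u) ≤ P/2 + (1 - P)² ≤ 1`, so summing over the `2m` darts gives `h² ≤ h + 2m`,
which forces `h ≤ √(3m + 1)` for an integer `m`. -/

namespace SimpleGraph

variable {V : Type*} (G : SimpleGraph V) [Fintype V] [DecidableEq V] [DecidableRel G.Adj]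

lemma two_mul_card_le_card_darts_within_add_two {A : Finset V}
    (hA : (G.induce (A : Set V)).Connected) :
    2 * #A ≤ #{d : G.Dart | d.fst ∈ A ∧ d.snd ∈ A} + 2 := by
  have hvert := hA.card_vert_le_card_edgeSet_add_one
  simp only [Nat.card_eq_fintype_card, card_edgeSet, SetLike.coe_sort_coe, Fintype.card_coe] at hvert
  have hdarts : Fintype.card (G.induce (A : Set V)).Dart ≤
      #{d : G.Dart | d.fst ∈ A ∧ d.snd ∈ A} := by
    rw [← card_univ]
    refine card_le_card_of_injOn (Embedding.induce (A : Set V)).toHom.mapDart ?_ ?_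
    · intro d _
      simp
    · intro d _ d' _ h
      simpa [Dart.ext_iff, Prod.ext_iff] using h
  rw [dart_card_eq_twice_card_edges] at hdarts
  omega

end SimpleGraph

lemma sum_sum_filter_eq_sum_card_filter_mul {α β R : Type*} [Semiring R] (s : Finset α)
    (B : Finset β) (p : α → β → Prop) [∀ x A, Decidable (p x A)] (w : β → R) :
    ∑ x ∈ s, ∑ A ∈ B with p x A, w A = ∑ A ∈ B, #{x ∈ s | p x A} * w A := by
  simp only [sum_filter, natCast_card_filter, sum_mul, ite_mul, one_mul, zero_mul]
  exact sum_comm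

lemma half_add_mul_le_one {p q r : ℝ} (hp : 0 ≤ p) (hq : 0 ≤ q) (hr : 0 ≤ r) (hpq : p + q ≤ 1)
    (hpr : p + r ≤ 1) : p / 2 + q * r ≤ 1 := by
  have hqr : q * r ≤ (1 - p) * (1 - p) := mul_le_mul (by linarith) (by linarith) hr (by linarith)
  nlinarith

section WeightAt

variable {V : Type*} [DecidableEq V] (B : Finset (Finset V)) (w : Finset V → ℝ)

noncomputable def weightAt (v : V) : ℝ := ∑ A ∈ B with v ∈ A, w A

noncomputable def weightAtBoth (u v : V) : ℝ := ∑ A ∈ B with u ∈ A ∧ v ∈ A, w A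

noncomputable def weightAtOnly (u v : V) : ℝ := ∑ A ∈ B with u ∈ A ∧ v ∉ A, w A

lemma weightAtBoth_add_weightAtOnly (u v : V) :
    weightAtBoth B w u v + weightAtOnly B w u v = weightAt B w u := by
  simpa only [weightAtBoth, weightAtOnly, weightAt, filter_filter] using
    sum_filter_add_sum_filter_not (B.filter (u ∈ ·)) (v ∈ ·) w

lemma weightAtBoth_comm (u v : V) : weightAtBoth B w u v = weightAtBoth B w v u := by
  simp only [weightAtBoth, and_comm]

lemma sum_weightAt [Fintype V] : ∑ v, weightAt B w v = ∑ A ∈ B, #A * w A := by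
  simp only [weightAt, sum_sum_filter_eq_sum_card_filter_mul, filter_mem_eq_inter, univ_inter]

lemma sum_weightAtBoth_darts [Fintype V] (G : SimpleGraph V) [DecidableRel G.Adj] :
    ∑ d : G.Dart, weightAtBoth B w d.fst d.snd =
      ∑ A ∈ B, #{d : G.Dart | d.fst ∈ A ∧ d.snd ∈ A} * w A :=
  sum_sum_filter_eq_sum_card_filter_mul _ _ _ _

variable {B w}

lemma weightAt_nonneg (hw : ∀ A ∈ B, 0 ≤ w A) (v : V) : 0 ≤ weightAt B w v :=
  sum_nonneg fun A hA => hw A (mem_filter.1 hA).1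

lemma weightAtBoth_nonneg (hw : ∀ A ∈ B, 0 ≤ w A) (u v : V) : 0 ≤ weightAtBoth B w u v :=
  sum_nonneg fun A hA => hw A (mem_filter.1 hA).1

lemma weightAtOnly_nonneg (hw : ∀ A ∈ B, 0 ≤ w A) (u v : V) : 0 ≤ weightAtOnly B w u v :=
  sum_nonneg fun A hA => hw A (mem_filter.1 hA).1

lemma weightAtBoth_div_two_add_mul_weightAtOnly_le_one (hw : ∀ A ∈ B, 0 ≤ w A)
    (hw₁ : ∀ v, weightAt B w v ≤ 1) (u v : V) :
    weightAtBoth B w u v / 2 + weightAtOnly B w u v * weightAtOnly B w v u ≤ 1 := by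
  refine half_add_mul_le_one (weightAtBoth_nonneg hw u v) (weightAtOnly_nonneg hw u v)
    (weightAtOnly_nonneg hw v u) ?_ ?_
  · rw [weightAtBoth_add_weightAtOnly]
    exact hw₁ u
  · rw [weightAtBoth_comm, weightAtBoth_add_weightAtOnly]
    exact hw₁ v

variable [Fintype V] (G : SimpleGraph V) [DecidableRel G.Adj]

lemma sum_sq_weightAt_le (hconn : ∀ A ∈ B, (G.induce (A : Set V)).Connected)
    (hw : ∀ A ∈ B, 0 ≤ w A) (hw₁ : ∀ v, weightAt B w v ≤ 1) :
    ∑ v, weightAt B w v ^ 2 ≤ ∑ A ∈ B, w A + ∑ d : G.Dart, weightAtBoth B w d.fst d.snd / 2 := by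
  have hcard (A : Finset V) (hA : A ∈ B) :
      (#A : ℝ) * w A ≤ w A + #{d : G.Dart | d.fst ∈ A ∧ d.snd ∈ A} / 2 * w A := by
    have : (2 * #A : ℝ) ≤ #{d : G.Dart | d.fst ∈ A ∧ d.snd ∈ A} + 2 := by
      exact_mod_cast G.two_mul_card_le_card_darts_within_add_two (hconn A hA)
    nlinarith [hw A hA]
  calc ∑ v, weightAt B w v ^ 2 ≤ ∑ v, weightAt B w v :=
        sum_le_sum fun v _ => pow_le_of_le_one (weightAt_nonneg hw v) (hw₁ v) two_ne_zero
    _ = ∑ A ∈ B, #A * w A := sum_weightAt B w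
    _ ≤ ∑ A ∈ B, (w A + #{d : G.Dart | d.fst ∈ A ∧ d.snd ∈ A} / 2 * w A) := sum_le_sum hcard
    _ = ∑ A ∈ B, w A + ∑ d : G.Dart, weightAtBoth B w d.fst d.snd / 2 := by
      rw [sum_add_distrib, ← sum_div, sum_weightAtBoth_darts B w G, sum_div]
      simp only [div_mul_eq_mul_div]

lemma mul_le_sum_common_add_sum_crossing {A A' : Finset V}
    (hAA' : (∃ v, v ∈ A ∧ v ∈ A') ∨ ∃ a ∈ A, ∃ b ∈ A', G.Adj a b) {x y : ℝ} (hx : 0 ≤ x)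
    (hy : 0 ≤ y) :
    x * y ≤ ∑ v, (if v ∈ A ∧ v ∈ A' then x * y else 0) +
      ∑ d : G.Dart, if (d.fst ∈ A ∧ d.snd ∉ A) ∧ d.snd ∈ A' ∧ d.fst ∉ A' then x * y else 0 := by
  have hnn (P : Prop) [Decidable P] : 0 ≤ if P then x * y else 0 := by
    split_ifs <;> positivity
  by_cases hcommon : ∃ v, v ∈ A ∧ v ∈ A'
  · obtain ⟨v, hv⟩ := hcommon
    calc x * y = if v ∈ A ∧ v ∈ A' then x * y else 0 := (if_pos hv).symm
      _ ≤ ∑ v, if v ∈ A ∧ v ∈ A' then x * y else 0 :=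
        single_le_sum (fun u _ => hnn (u ∈ A ∧ u ∈ A')) (mem_univ v)
      _ ≤ _ := le_add_of_nonneg_right (sum_nonneg fun _ _ => hnn _)
  · obtain ⟨a, ha, b, hb, hab⟩ := hAA'.resolve_left hcommon
    have hcross : (a ∈ A ∧ b ∉ A) ∧ b ∈ A' ∧ a ∉ A' :=
      ⟨⟨ha, fun hbA => hcommon ⟨b, hbA, hb⟩⟩, hb, fun haA' => hcommon ⟨a, ha, haA'⟩⟩
    let d : G.Dart := ⟨(a, b), hab⟩
    calc x * y = if (d.fst ∈ A ∧ d.snd ∉ A) ∧ d.snd ∈ A' ∧ d.fst ∉ A' then x * y else 0 :=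
          (if_pos hcross).symm
      _ ≤ ∑ d : G.Dart, if (d.fst ∈ A ∧ d.snd ∉ A) ∧ d.snd ∈ A' ∧ d.fst ∉ A' then x * y else 0 :=
        single_le_sum (fun e _ => hnn ((e.fst ∈ A ∧ e.snd ∉ A) ∧ e.snd ∈ A' ∧ e.fst ∉ A'))
          (mem_univ d)
      _ ≤ _ := le_add_of_nonneg_left (sum_nonneg fun _ _ => hnn _)

lemma sq_sum_le_sum_sq_weightAt_add_sum_darts
    (hB : ∀ A ∈ B, ∀ A' ∈ B, (∃ v, v ∈ A ∧ v ∈ A') ∨ ∃ a ∈ A, ∃ b ∈ A', G.Adj a b)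
    (hw : ∀ A ∈ B, 0 ≤ w A) :
    (∑ A ∈ B, w A) ^ 2 ≤ ∑ v, weightAt B w v ^ 2 +
      ∑ d : G.Dart, weightAtOnly B w d.fst d.snd * weightAtOnly B w d.snd d.fst := by
  simp only [weightAt, weightAtOnly, sq, sum_filter, sum_mul_sum, ite_zero_mul_ite_zero]
  rw [← sum_comm_cycle (u := (univ : Finset V)), ← sum_comm_cycle (u := (univ : Finset G.Dart)),
    ← sum_add_distrib]
  refine sum_le_sum fun A hA => ?_
  rw [← sum_add_distrib]
  exact sum_le_sum fun A' hA' =>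
    mul_le_sum_common_add_sum_crossing G (hB A hA A' hA') (hw A hA) (hw A' hA')

end WeightAt

lemma le_sqrt_three_mul_add_one {h : ℝ} {m : ℕ} (hh : 0 ≤ h) (hsq : h ^ 2 ≤ h + 2 * m) :
    h ≤ √(3 * m + 1) := by
  refine Real.le_sqrt_of_sq_le ?_
  have hm : (0 : ℝ) ≤ m * (m - 1) := by
    rcases m.eq_zero_or_pos with rfl | hm
    · simp
    · have : (1 : ℝ) ≤ m := by exact_mod_cast hm
      positivity
  nlinarith

lemma IsBramble.sq_sum_le {V : Type} [Fintype V] [DecidableEq V] {G : SimpleGraph V}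
    [DecidableRel G.Adj] {B : Finset (Finset V)} {w : Finset V → ℝ} (hB : IsBramble G B)
    (hw : IsValidWeight B w) :
    (∑ A ∈ B, w A) ^ 2 ≤ ∑ A ∈ B, w A + 2 * #G.edgeFinset :=
  calc (∑ A ∈ B, w A) ^ 2
      ≤ ∑ v, weightAt B w v ^ 2 +
          ∑ d : G.Dart, weightAtOnly B w d.fst d.snd * weightAtOnly B w d.snd d.fst :=
        sq_sum_le_sum_sq_weightAt_add_sum_darts G hB.2 hw.1
    _ ≤ ∑ A ∈ B, w A + ∑ d : G.Dart, (weightAtBoth B w d.fst d.snd / 2 +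
          weightAtOnly B w d.fst d.snd * weightAtOnly B w d.snd d.fst) := by
        rw [sum_add_distrib, ← add_assoc]
        gcongr
        exact sum_sq_weightAt_le G hB.1 hw.1 hw.2
    _ ≤ ∑ A ∈ B, w A + ∑ _d : G.Dart, 1 := by
        gcongr with d
        exact weightAtBoth_div_two_add_mul_weightAtOnly_le_one hw.1 hw.2 d.fst d.snd
    _ = ∑ A ∈ B, w A + 2 * #G.edgeFinset := by
        simp [G.dart_card_eq_twice_card_edges]

/-- if `G` has `m` edges then `h_f(G) ≤ √(3m+1)`. -/
theorem fracHadwiger_le_sqrt_edges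
    {V : Type} [Fintype V] [DecidableEq V] (G : SimpleGraph V) (m : ℕ)
    (hm : G.edgeSet.ncard = m) :
    fracHadwiger G ≤ Real.sqrt (3 * (m : ℝ) + 1) := by
  classical
  refine Real.sSup_le ?_ (Real.sqrt_nonneg _)
  rintro _ ⟨B, w, hB, hw, rfl⟩
  have hedges : (#G.edgeFinset : ℝ) = m := by
    rw [← hm, ← G.coe_edgeFinset, Set.ncard_coe_finset]
  exact le_sqrt_three_mul_add_one (sum_nonneg hw.1) (hedges ▸ hB.sq_sum_le hw)
end

section
/- Fix 0 < ε < 1, let n be a positive integer, set d = √((1−ε)·log₂ n) and h = ⌈4·n^{1−ε}·d·ln n⌉, and assume d ≥ 1. Then the proportion of labeled graphs on the vertex set {1,…,n} that contain a clique minor of order at least h and breadth at most d is at most n^{d·h} · e^{−n^{ε−1}·h(h−1)/2}. -/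
open Finset

/-!
Union bound over branch sets. Put `k = ⌊d⌋`. Listing each branch set as the image of a map
`Fin k → V`, the first `h` branch sets of a clique minor of breadth at most `d` are described by
one of `n ^ (k h)` maps. For a fixed choice of `h` disjoint branch sets, the `h(h-1)/2` events
"some edge joins the `i`-th and `j`-th set" concern pairwise disjoint sets of at most `k²`
potential edges, so they are independent in a uniformly random graph, each of probability at
most `1 - 2^(-k²)`. Finally `2^(-k²) ≥ 2^(-d²) = n^(ε-1)` and `1 - x ≤ e^(-x)`.
-/

open Function

theorem one_sub_inv_two_pow_nonneg (m : ℕ) : (0 : ℝ) ≤ 1 - 2⁻¹ ^ m :=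
  sub_nonneg.mpr (pow_le_one₀ (by norm_num) (by norm_num))

section Hitting

variable {α : Type*} [Fintype α] [DecidableEq α]

theorem card_filter_and_exists_eq_true (T : Finset α) (R : (α → Bool) → Prop) [DecidablePred R]
    (hR : ∀ b b', (∀ a ∉ T, b a = b' a) → R b → R b') :
    (#{b | R b ∧ ∃ a ∈ T, b a = true} : ℝ) = #{b | R b} * (1 - 2⁻¹ ^ #T) := by
  classical
  let e := Equiv.piEquivPiSubtypeProd (· ∈ T) (fun _ => Bool)
  let R' : ({a // a ∉ T} → Bool) → Prop := fun c => R (e.symm (fun _ => false, c))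
  have hR' : ∀ b, R b ↔ R' (e b).2 := fun b =>
    ⟨hR _ _ fun a ha => by simp [e, ha], hR _ _ fun a ha => by simp [e, ha]⟩
  have hprod (Q : ({a // a ∈ T} → Bool) → Prop) [DecidablePred Q] :
      #{b | Q (e b).1 ∧ R b} = #{c | Q c} * #{c | R' c} := by
    rw [← card_product, ← filter_product, univ_product_univ]
    exact card_equiv e (by simp [hR'])
  have hall : #{b | R b} = 2 ^ #T * #{c | R' c} := by
    simpa using hprod (fun _ => True)
  have hhit : #{b | R b ∧ ∃ a ∈ T, b a = true} = (2 ^ #T - 1) * #{c | R' c} := by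
    have := hprod (· ≠ fun _ => false)
    simp only [filter_ne', card_erase_of_mem (mem_univ _), card_univ, Fintype.card_fun,
      Fintype.card_bool, Fintype.card_coe] at this
    rw [← this]
    congr 1
    ext b
    simp only [mem_filter, mem_univ, true_and, ne_eq, funext_iff, not_forall]
    simp [e, and_comm]
  rw [hhit, hall]
  push_cast [Nat.one_le_two_pow]
  have h2 : (2 : ℝ) ^ #T * 2⁻¹ ^ #T = 1 := by rw [← mul_pow]; norm_num
  linear_combination (#{c | R' c} : ℝ) * h2

theorem card_filter_forall_exists_eq_true {ι : Type*} [DecidableEq ι] (S : ι → Finset α)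
    (P : Finset ι) (hS : (P : Set ι).PairwiseDisjoint S) :
    (#{b : α → Bool | ∀ p ∈ P, ∃ a ∈ S p, b a = true} : ℝ) =
      2 ^ Fintype.card α * ∏ p ∈ P, (1 - 2⁻¹ ^ #(S p)) := by
  induction P using Finset.induction_on with
  | empty =>
    simp only [notMem_empty, IsEmpty.forall_iff, implies_true, filter_true_of_mem, card_univ,
      Fintype.card_fun, Fintype.card_bool, Nat.cast_pow, Nat.cast_ofNat, prod_empty, mul_one]
  | insert q P hq ih =>
    have hsplit (b : α → Bool) : (∀ p ∈ insert q P, ∃ a ∈ S p, b a = true) ↔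
        (∀ p ∈ P, ∃ a ∈ S p, b a = true) ∧ ∃ a ∈ S q, b a = true := by
      rw [forall_mem_insert, and_comm]
    simp_rw [hsplit]
    rw [prod_insert hq, mul_left_comm, ← ih (hS.subset (by simp)), mul_comm]
    refine card_filter_and_exists_eq_true (S q) _ fun b b' hbb' hb p hp => ?_
    obtain ⟨a, ha, hba⟩ := hb p hp
    have haq : a ∉ S q := disjoint_left.mp
      (hS (by simp [hp]) (by simp) (ne_of_mem_of_not_mem hp hq)) ha
    exact ⟨a, ha, hbb' a haq ▸ hba⟩

end Hitting

namespace SimpleGraph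

variable {V : Type*}

open scoped Classical in
noncomputable def edgeIndicatorEquiv : SimpleGraph V ≃ ({e : Sym2 V // ¬e.IsDiag} → Bool) where
  toFun G e := decide (e.1 ∈ G.edgeSet)
  invFun b := fromEdgeSet {e | ∃ h : ¬e.IsDiag, b ⟨e, h⟩ = true}
  left_inv G := by
    ext a c
    simp only [fromEdgeSet_adj, decide_eq_true_eq]
    exact ⟨fun h => h.1.2, fun hadj => ⟨⟨by simpa using hadj.ne, hadj⟩, hadj.ne⟩⟩
  right_inv b := by
    funext ⟨e, he⟩
    simp [he]

theorem edgeIndicatorEquiv_apply_eq_true {G : SimpleGraph V} {e : {e : Sym2 V // ¬e.IsDiag}} :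
    edgeIndicatorEquiv G e = true ↔ e.1 ∈ G.edgeSet := by
  simp [edgeIndicatorEquiv]

theorem card_eq_two_pow_choose_two [Fintype V] [DecidableEq V] :
    Fintype.card (SimpleGraph V) = 2 ^ (Fintype.card V).choose 2 := by
  rw [Fintype.card_congr edgeIndicatorEquiv, Fintype.card_fun, Fintype.card_bool,
    Sym2.card_subtype_not_diag]

end SimpleGraph

section CrossEdges

variable {V : Type*} [DecidableEq V]

def crossEdges (A B : Finset V) : Finset {e : Sym2 V // ¬e.IsDiag} :=
  ((A ×ˢ B).image fun x => s(x.1, x.2)).subtype (¬·.IsDiag)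

theorem mem_crossEdges {A B : Finset V} {e : {e : Sym2 V // ¬e.IsDiag}} :
    e ∈ crossEdges A B ↔ ∃ a ∈ A, ∃ b ∈ B, s(a, b) = e.1 := by
  simp [crossEdges, and_assoc]

theorem card_crossEdges_le (A B : Finset V) : #(crossEdges A B) ≤ #A * #B := by
  unfold crossEdges
  rw [card_subtype, ← card_product]
  exact (card_filter_le _ _).trans card_image_le

theorem pairwiseDisjoint_crossEdges {ι : Type*} [LinearOrder ι] {F : ι → Finset V}
    (hF : Pairwise (Disjoint on F)) :
    {p : ι × ι | p.1 < p.2}.PairwiseDisjoint fun p => crossEdges (F p.1) (F p.2) := by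
  have hidx {i j : ι} {a : V} (hi : a ∈ F i) (hj : a ∈ F j) : i = j :=
    by_contra fun hij => disjoint_left.mp (hF hij) hi hj
  rintro ⟨i, j⟩ (hij : i < j) ⟨i', j'⟩ (hij' : i' < j') hne
  refine disjoint_left.mpr fun e he he' => hne ?_
  obtain ⟨a, ha, b, hb, hab⟩ := mem_crossEdges.mp he
  obtain ⟨a', ha', b', hb', hab'⟩ := mem_crossEdges.mp he'
  rcases Sym2.eq_iff.mp (hab.trans hab'.symm) with ⟨rfl, rfl⟩ | ⟨rfl, rfl⟩
  · exact Prod.ext (hidx ha ha') (hidx hb hb')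
  · obtain rfl : i = j' := hidx ha hb'
    obtain rfl : j = i' := hidx hb ha'
    exact (lt_asymm hij hij').elim

end CrossEdges

namespace SimpleGraph

variable {V : Type*} [Fintype V] [DecidableEq V]

open scoped Classical in
noncomputable def pairwiseJoining {ι : Type*} [Fintype ι] [LinearOrder ι] (F : ι → Finset V) :
    Finset (SimpleGraph V) :=
  {G | ∀ i j, i < j → ∃ a ∈ F i, ∃ b ∈ F j, G.Adj a b}

theorem mem_pairwiseJoining {ι : Type*} [Fintype ι] [LinearOrder ι] {F : ι → Finset V}
    {G : SimpleGraph V} :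
    G ∈ pairwiseJoining F ↔ ∀ i j, i < j → ∃ a ∈ F i, ∃ b ∈ F j, G.Adj a b := by
  simp [pairwiseJoining]

theorem card_pairwiseJoining_le {ι : Type*} [Fintype ι] [LinearOrder ι]
    {F : ι → Finset V} (hF : Pairwise (Disjoint on F)) {k : ℕ} (hk : ∀ i, #(F i) ≤ k) :
    (#(pairwiseJoining F) : ℝ) ≤
      2 ^ (Fintype.card V).choose 2 * (1 - 2⁻¹ ^ (k * k)) ^ (Fintype.card ι).choose 2 := by
  let P : Finset (ι × ι) := {p | p.1 < p.2}
  have hdisj : (P : Set (ι × ι)).PairwiseDisjoint fun p => crossEdges (F p.1) (F p.2) :=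
    (pairwiseDisjoint_crossEdges hF).subset fun p hp => (mem_filter.mp hp).2
  have hprod := card_filter_forall_exists_eq_true _ _ hdisj
  rw [Sym2.card_subtype_not_diag] at hprod
  refine le_trans ?_ (hprod.trans_le ?_)
  · refine Nat.cast_le.mpr
      (card_le_card_of_injOn _ (fun G hG => ?_) edgeIndicatorEquiv.injective.injOn)
    simp only [mem_coe, mem_pairwiseJoining, coe_filter, mem_univ, true_and,
      Set.mem_ofPred_eq] at hG ⊢
    intro p hp
    obtain ⟨a, ha, b, hb, hadj⟩ := hG p.1 p.2 (mem_filter.mp hp).2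
    exact ⟨⟨s(a, b), G.not_isDiag_of_mem_edgeSet hadj⟩, mem_crossEdges.mpr ⟨a, ha, b, hb, rfl⟩,
      edgeIndicatorEquiv_apply_eq_true.mpr hadj⟩
  · rw [← Fintype.card_product_filter_lt (α := ι), ← prod_const]
    refine mul_le_mul_of_nonneg_left (prod_le_prod (fun p _ => ?_) fun p _ => ?_) (by positivity)
    · exact one_sub_inv_two_pow_nonneg _
    · have := (card_crossEdges_le _ _).trans (Nat.mul_le_mul (hk p.1) (hk p.2))
      linarith [pow_le_pow_of_le_one (by norm_num : (0 : ℝ) ≤ 2⁻¹) (by norm_num) this]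

end SimpleGraph

theorem Finset.exists_fin_image_univ_eq {V : Type*} [DecidableEq V] {s : Finset V}
    (hs : s.Nonempty) {k : ℕ} (hk : #s ≤ k) : ∃ g : Fin k → V, univ.image g = s := by
  obtain ⟨f, hf⟩ := (exists_surjective_iff (α := Fin k) (β := s)).mpr
    ⟨⟨fun _ => ⟨_, hs.choose_spec⟩⟩, Embedding.nonempty_of_card_le (by simpa using hk)⟩
  refine ⟨Subtype.val ∘ f, ext fun x => ⟨fun hx => ?_, fun hx => ?_⟩⟩
  · obtain ⟨i, -, rfl⟩ := mem_image.mp hx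
    exact (f i).2
  · obtain ⟨i, hi⟩ := hf ⟨x, hx⟩
    exact mem_image.mpr ⟨i, mem_univ _, by simp [hi]⟩

theorem HasCliqueMinorBreadth.exists_fin_family {V : Type} [DecidableEq V] {G : SimpleGraph V}
    {t h : ℕ} {d : ℝ} (hG : HasCliqueMinorBreadth G t d) (ht : h ≤ t) :
    ∃ g : Fin h → Fin ⌊d⌋₊ → V, Pairwise (Disjoint on fun i => univ.image (g i)) ∧
      ∀ i j, i < j → ∃ a ∈ univ.image (g i), ∃ b ∈ univ.image (g j), G.Adj a b := by
  obtain ⟨f, hne, -, hdisj, hadj, hcard⟩ := hG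
  choose g hg using fun i : Fin h =>
    Finset.exists_fin_image_univ_eq (hne (Fin.castLE ht i)) (Nat.le_floor (hcard _))
  refine ⟨g, fun i j hij => ?_, fun i j hij => ?_⟩
  · simpa only [hg] using hdisj _ _ ((Fin.castLE_injective ht).ne hij)
  · simpa only [hg] using hadj _ _ ((Fin.castLE_injective ht).ne hij.ne)

theorem card_hasCliqueMinorBreadth_le {V : Type} [Fintype V] [DecidableEq V] (h : ℕ) (d : ℝ) :
    (Nat.card {G : SimpleGraph V // ∃ t, h ≤ t ∧ HasCliqueMinorBreadth G t d} : ℝ) ≤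
      (Fintype.card V : ℝ) ^ (⌊d⌋₊ * h) * (1 - 2⁻¹ ^ (⌊d⌋₊ * ⌊d⌋₊)) ^ h.choose 2 *
        2 ^ (Fintype.card V).choose 2 := by
  classical
  set k := ⌊d⌋₊
  let D : Finset (Fin h → Fin k → V) := {g | Pairwise (Disjoint on fun i => univ.image (g i))}
  let E (g : Fin h → Fin k → V) := SimpleGraph.pairwiseJoining fun i => univ.image (g i)
  have hsub : ({G | ∃ t, h ≤ t ∧ HasCliqueMinorBreadth G t d} : Finset (SimpleGraph V)) ⊆
      D.biUnion E := by
    intro G hG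
    obtain ⟨t, ht, hGt⟩ := (mem_filter.mp hG).2
    obtain ⟨g, hgD, hgE⟩ := hGt.exists_fin_family ht
    exact mem_biUnion.mpr
      ⟨g, mem_filter.mpr ⟨mem_univ _, hgD⟩, SimpleGraph.mem_pairwiseJoining.mpr hgE⟩
  rw [Nat.card_eq_fintype_card, Fintype.card_subtype]
  calc _ ≤ (#(D.biUnion E) : ℝ) := by exact_mod_cast card_le_card hsub
    _ ≤ ∑ g ∈ D, (#(E g) : ℝ) := by exact_mod_cast card_biUnion_le
    _ ≤ ∑ g ∈ D, 2 ^ (Fintype.card V).choose 2 * (1 - 2⁻¹ ^ (k * k)) ^ h.choose 2 :=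
        sum_le_sum fun g hg => by
          simpa using SimpleGraph.card_pairwiseJoining_le (mem_filter.mp hg).2
            fun i => card_image_le.trans_eq (card_fin k)
    _ ≤ #(univ : Finset (Fin h → Fin k → V)) *
          (2 ^ (Fintype.card V).choose 2 * (1 - 2⁻¹ ^ (k * k)) ^ h.choose 2) := by
        rw [sum_const, nsmul_eq_mul]
        have := one_sub_inv_two_pow_nonneg (k * k)
        gcongr
        exact subset_univ D
    _ = _ := by
        simp only [card_univ, Fintype.card_fun, Fintype.card_fin, ← pow_mul]
        push_cast
        ring

theorem rpow_sub_one_le_inv_two_pow_floor_mul_floor {ε d x : ℝ} (hx : 0 < x)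
    (hd : d = √((1 - ε) * Real.logb 2 x)) (hd0 : 0 < d) :
    x ^ (ε - 1) ≤ 2⁻¹ ^ (⌊d⌋₊ * ⌊d⌋₊) := by
  have hsq : d * d = (1 - ε) * Real.logb 2 x :=
    hd ▸ Real.mul_self_sqrt (Real.sqrt_pos.mp (hd ▸ hd0)).le
  have hfloor := Nat.floor_le hd0.le
  conv_lhs => rw [← Real.rpow_logb two_pos (by norm_num) hx]
  rw [← Real.rpow_mul zero_le_two, inv_pow, ← Real.rpow_natCast, ← Real.rpow_neg zero_le_two]
  refine Real.rpow_le_rpow_of_exponent_le one_le_two ?_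
  push_cast
  nlinarith [Nat.cast_nonneg (α := ℝ) ⌊d⌋₊]

theorem one_sub_pow_le_exp_neg_mul {x y : ℝ} (hxy : x ≤ y) (hy : y ≤ 1) (m : ℕ) :
    (1 - y) ^ m ≤ Real.exp (-x * m) :=
  calc (1 - y) ^ m ≤ (1 - x) ^ m := pow_le_pow_left₀ (by linarith) (by linarith) m
    _ ≤ Real.exp (-x) ^ m := pow_le_pow_left₀ (by linarith) (Real.one_sub_le_exp_neg x) m
    _ = Real.exp (-x * m) := by rw [← Real.exp_nat_mul, mul_comm]

theorem proportion_with_broad_clique_minor_le_general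
    (ε : ℝ) (n : ℕ)
    (d : ℝ) (hd : d = Real.sqrt ((1 - ε) * Real.logb 2 (n : ℝ)))
    (h : ℕ) (hd1 : 1 ≤ d) :
    (Nat.card {G : SimpleGraph (Fin n) // ∃ t : ℕ, h ≤ t ∧ HasCliqueMinorBreadth G t d} : ℝ)
        / (Nat.card (SimpleGraph (Fin n)) : ℝ)
      ≤ (n : ℝ) ^ (d * (h : ℝ)) *
        Real.exp (-(n : ℝ) ^ (ε - 1) * ((h : ℝ) * ((h : ℝ) - 1) / 2)) := by
  have hn : 0 < n := Nat.pos_of_ne_zero fun hn0 => by simp [hn0] at hd; linarith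
  have hx : (n : ℝ) ^ (ε - 1) ≤ 2⁻¹ ^ (⌊d⌋₊ * ⌊d⌋₊) :=
    rpow_sub_one_le_inv_two_pow_floor_mul_floor (by exact_mod_cast hn) hd (by linarith)
  rw [Nat.card_eq_fintype_card (α := SimpleGraph (Fin n)),
    SimpleGraph.card_eq_two_pow_choose_two, Nat.cast_pow, Nat.cast_ofNat,
    div_le_iff₀ (by positivity)]
  refine (card_hasCliqueMinorBreadth_le h d).trans ?_
  rw [Fintype.card_fin, ← Nat.cast_choose_two ℝ h]
  have hpow : (n : ℝ) ^ (⌊d⌋₊ * h) ≤ (n : ℝ) ^ (d * h) := by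
    rw [← Real.rpow_natCast, Nat.cast_mul]
    exact Real.rpow_le_rpow_of_exponent_le (by exact_mod_cast hn)
      (by gcongr; exact Nat.floor_le (by linarith))
  have hq := one_sub_inv_two_pow_nonneg (⌊d⌋₊ * ⌊d⌋₊)
  have hexp := one_sub_pow_le_exp_neg_mul hx (sub_nonneg.mp hq) (h.choose 2)
  exact mul_le_mul_of_nonneg_right (mul_le_mul hpow hexp (by positivity) (by positivity))
    (by positivity)

/-- the proportion of labeled graphs on `{1,…,n}` containing a clique minor of
order at least `h = ⌈4 n^{1-ε} d ln n⌉` and breadth at most `d = √((1-ε) log₂ n)` is at most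
`n^{d h} e^{-n^{ε-1} h(h-1)/2}`. -/
theorem proportion_with_broad_clique_minor_le
    (ε : ℝ) (hε0 : 0 < ε) (hε1 : ε < 1) (n : ℕ) (hn : 0 < n)
    (d : ℝ) (hd : d = Real.sqrt ((1 - ε) * Real.logb 2 (n : ℝ)))
    (h : ℕ) (hh : h = ⌈4 * (n : ℝ) ^ ((1 : ℝ) - ε) * d * Real.log (n : ℝ)⌉₊)
    (hd1 : 1 ≤ d) :
    (Nat.card {G : SimpleGraph (Fin n) // ∃ t : ℕ, h ≤ t ∧ HasCliqueMinorBreadth G t d} : ℝ)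
        / (Nat.card (SimpleGraph (Fin n)) : ℝ)
      ≤ (n : ℝ) ^ (d * (h : ℝ)) *
        Real.exp (-(n : ℝ) ^ (ε - 1) * ((h : ℝ) * ((h : ℝ) - 1) / 2)) :=
  proportion_with_broad_clique_minor_le_general ε n d hd h hd1
end
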